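/- Let AF = ⟨AR, attacks⟩ be a finite argumentation framework. A set S ⊆ AR is a preferred extension of AF if and only if S is a maximal model of the propositional formula β(AF) = ⋀_{a ∈ AR} ( (a → ⋀_{b:(b,a)∈attacks} ¬b) ∧ (a → ⋀_{b:(b,a)∈attacks} ⋁_{c:(c,b)∈attacks} c) ), where each argument is treated as a propositional atom. -/
import Mathlib


inductive PForm (α : Type) where
  | atom : α → PForm α
  | tru : PForm α
  | fls : PForm α
  | neg : PForm α → PForm α
  | conj : PForm α → PForm α → PForm α
  | disj : PForm α → PForm α → PForm α
  | impl : PForm α → PForm α → PForm α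
deriving DecidableEq

def PForm.eval {α : Type} (M : Set α) : PForm α → Prop
  | .atom a => a ∈ M
  | .tru => True
  | .fls => False
  | .neg φ => ¬ PForm.eval M φ
  | .conj φ ψ => PForm.eval M φ ∧ PForm.eval M ψ
  | .disj φ ψ => PForm.eval M φ ∨ PForm.eval M ψ
  | .impl φ ψ => PForm.eval M φ → PForm.eval M ψ

def PForm.subst {α β : Type} (σ : α → PForm β) : PForm α → PForm β
  | .atom a => σ a
  | .tru => .tru
  | .fls => .fls
  | .neg φ => .neg (PForm.subst σ φ)
  | .conj φ ψ => .conj (PForm.subst σ φ) (PForm.subst σ ψ)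
  | .disj φ ψ => .disj (PForm.subst σ φ) (PForm.subst σ ψ)
  | .impl φ ψ => .impl (PForm.subst σ φ) (PForm.subst σ ψ)

def ModelOf {α : Type} (M : Set α) (T : Set (PForm α)) : Prop := ∀ φ ∈ T, PForm.eval M φ

def MinimalModel {α : Type} (M : Set α) (T : Set (PForm α)) : Prop :=
  ModelOf M T ∧ ∀ M', ModelOf M' T → M' ⊆ M → M' = M

def MaximalModel {α : Type} (M : Set α) (T : Set (PForm α)) : Prop :=
  ModelOf M T ∧ ∀ M', ModelOf M' T → M ⊆ M' → M' = M

noncomputable def bigConj {ι α : Type} (s : Finset ι) (f : ι → PForm α) : PForm α :=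
  (s.toList.map f).foldr PForm.conj PForm.tru

noncomputable def bigDisj {ι α : Type} (s : Finset ι) (f : ι → PForm α) : PForm α :=
  (s.toList.map f).foldr PForm.disj PForm.fls

def attackers {α : Type} [DecidableEq α] (att : Finset (α × α)) (a : α) : Finset α :=
  (att.filter (fun p => p.2 = a)).image Prod.fst

def conflictFree {α : Type} (att : Finset (α × α)) (S : Set α) : Prop :=
  ∀ a ∈ S, ∀ b ∈ S, (a, b) ∉ att

def acceptable {α : Type} (att : Finset (α × α)) (S : Set α) (a : α) : Prop :=
  ∀ b, (b, a) ∈ att → ∃ c ∈ S, (c, b) ∈ att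

def admissible {α : Type} (att : Finset (α × α)) (S : Set α) : Prop :=
  conflictFree att S ∧ ∀ a ∈ S, acceptable att S a

def preferredExt {α : Type} (att : Finset (α × α)) (S : Set α) : Prop :=
  admissible att S ∧ ∀ S', admissible att S' → S ⊆ S' → S' = S

noncomputable def alphaTheory {α : Type} [DecidableEq α] (att : Finset (α × α)) : Set (PForm α) :=
  { φ | ∃ p ∈ att, φ = PForm.impl (PForm.neg (PForm.atom p.1)) (PForm.atom p.2) } ∪
  { φ | ∃ p ∈ att, φ = PForm.impl (bigConj (attackers att p.1) PForm.atom) (PForm.atom p.2) }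

noncomputable def betaTheory {α : Type} [DecidableEq α] (att : Finset (α × α)) : Set (PForm α) :=
  { φ | ∃ p ∈ att, φ = PForm.impl (PForm.atom p.2) (PForm.neg (PForm.atom p.1)) } ∪
  { φ | ∃ p ∈ att, φ = PForm.impl (PForm.atom p.2) (bigDisj (attackers att p.1) PForm.atom) }


lemma eval_foldr_disj {α : Type} (M : Set α) (l : List (PForm α)) :
    PForm.eval M (l.foldr PForm.disj PForm.fls) ↔ ∃ φ ∈ l, PForm.eval M φ := by
  induction l with
  | nil => simp [PForm.eval]
  | cons h t ih => simp [PForm.eval, ih]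

lemma eval_bigDisj {ι α : Type} (M : Set α) (s : Finset ι) (f : ι → PForm α) :
    PForm.eval M (bigDisj s f) ↔ ∃ i ∈ s, PForm.eval M (f i) := by
  unfold bigDisj
  rw [eval_foldr_disj]
  simp

lemma mem_attackers {α : Type} [DecidableEq α] (att : Finset (α × α)) (a c : α) :
    c ∈ attackers att a ↔ (c, a) ∈ att := by
  unfold attackers
  simp only [Finset.mem_image, Finset.mem_filter]
  constructor
  · rintro ⟨⟨x, y⟩, ⟨hx, rfl⟩, rfl⟩; exact hx
  · intro h; exact ⟨(c, a), ⟨h, rfl⟩, rfl⟩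

lemma modelOf_beta_iff {α : Type} [DecidableEq α] (att : Finset (α × α)) (S : Set α) :
    ModelOf S (betaTheory att) ↔ admissible att S := by
  constructor
  · intro hM
    constructor
    · intro a ha b hb hab
      have h := hM _ (Or.inl ⟨(a, b), hab, rfl⟩)
      exact h hb ha
    · intro a ha b hba
      have h := hM _ (Or.inr ⟨(b, a), hba, rfl⟩)
      have := (eval_bigDisj S (attackers att b) PForm.atom).mp (h ha)
      obtain ⟨c, hc, hcS⟩ := this
      exact ⟨c, hcS, (mem_attackers att b c).mp hc⟩
  · rintro ⟨hcf, hacc⟩ φ hφ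
    rcases hφ with ⟨⟨b, a⟩, hp, rfl⟩ | ⟨⟨b, a⟩, hp, rfl⟩
    · intro ha hb
      exact hcf b hb a ha hp
    · intro ha
      obtain ⟨c, hcS, hcb⟩ := hacc a ha b hp
      exact (eval_bigDisj S (attackers att b) PForm.atom).mpr
        ⟨c, (mem_attackers att b c).mpr hcb, hcS⟩

theorem stmt2 {α : Type} [DecidableEq α] [Fintype α] (att : Finset (α × α)) (S : Set α) :
    preferredExt att S ↔ MaximalModel S (betaTheory att) := by
  unfold preferredExt MaximalModel
  constructor
  · rintro ⟨h1, h2⟩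
    exact ⟨(modelOf_beta_iff att S).mpr h1,
      fun M' hM' hs => h2 M' ((modelOf_beta_iff att M').mp hM') hs⟩
  · rintro ⟨h1, h2⟩
    exact ⟨(modelOf_beta_iff att S).mp h1,
      fun S' hS' hs => h2 S' ((modelOf_beta_iff att S').mpr hS') hs⟩
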